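/- Let β : ℝ → ℝ be a convex function and β*(α) = inf_{q∈ℝ}(β(q) − qα) its (concave) conjugate on its domain D = {α : β*(α) > −∞}. If β_i is a sequence of convex functions converging pointwise to β, then β_i*(α) → β*(α) for every α in the interior of D. -/

import Mathlib

/-!
Put `f = β - α·id` and `fᵢ = βᵢ - α·id`. Some `b' < α < b` also lie in the domain of `β*`, so `f`
grows at least linearly at `±∞`, hence `f(L), f(R) > f(0)` for some `L < 0 < R`; eventually the same
holds for `fᵢ`, and convexity makes `fᵢ` monotone beyond `L` and `R`. On `[L, R]` convexity gives
`fᵢ(q) ≥ fᵢ(x) - Sᵢ·|q - x|` with slopes `Sᵢ` converging, so `fᵢ` is eventually almost `≥ f(x)` near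
each `x`, and compactness makes this uniform. Hence `inf fᵢ` is eventually almost `≥ inf f`, while
`inf fᵢ ≤ fᵢ(q) → f(q)` gives the other inequality.
-/

open Set Filter Topology

theorem ConvexOn.sub_mul_abs_sub_le {g : ℝ → ℝ} (hg : ConvexOn ℝ univ g) (x q : ℝ) :
    g x - (|g x - g (x - 1)| + |g (x + 1) - g x|) * |q - x| ≤ g q := by
  have h₁ := abs_nonneg (g x - g (x - 1))
  have h₂ := abs_nonneg (g (x + 1) - g x)
  rcases lt_trichotomy q x with h | rfl | h
  · have hslope := hg.slope_mono_adjacent (mem_univ q) (mem_univ (x + 1)) h (lt_add_one x)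
    rw [add_sub_cancel_left, div_one, div_le_iff₀ (sub_pos.2 h)] at hslope
    rw [abs_of_neg (sub_neg.2 h)]
    nlinarith [le_abs_self (g (x + 1) - g x)]
  · simp
  · have hslope := hg.slope_mono_adjacent (mem_univ (x - 1)) (mem_univ q) (sub_one_lt x) h
    rw [sub_sub_cancel, div_one, le_div_iff₀ (sub_pos.2 h)] at hslope
    rw [abs_of_pos (sub_pos.2 h)]
    nlinarith [neg_abs_le (g x - g (x - 1))]

section

variable {ι : Type*} {l : Filter ι} {fs : ι → ℝ → ℝ} {f : ℝ → ℝ} {a : ℝ}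

theorem eventually_prod_nhds_lt_of_convexOn (hfs : ∀ i, ConvexOn ℝ univ (fs i))
    (hc : ∀ q, Tendsto (fun i => fs i q) l (𝓝 (f q))) {x : ℝ} (ha : a < f x) :
    ∀ᶠ p in l ×ˢ 𝓝 x, a < fs p.1 p.2 := by
  set S : ι → ℝ := fun i => |fs i x - fs i (x - 1)| + |fs i (x + 1) - fs i x|
  have hS : Tendsto S l (𝓝 (|f x - f (x - 1)| + |f (x + 1) - f x|)) :=
    ((hc x).sub (hc _)).abs.add ((hc _).sub (hc x)).abs
  have hdist : Tendsto (fun q => |q - x|) (𝓝 x) (𝓝 0) := by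
    simpa using ((tendsto_id (x := 𝓝 x)).sub_const x).abs
  have hlim : Tendsto (fun p : ι × ℝ => fs p.1 x - S p.1 * |p.2 - x|) (l ×ˢ 𝓝 x) (𝓝 (f x)) := by
    simpa using ((hc x).comp tendsto_fst).sub ((hS.comp tendsto_fst).mul (hdist.comp tendsto_snd))
  filter_upwards [hlim.eventually_const_lt ha] with p hp
    using hp.trans_le ((hfs p.1).sub_mul_abs_sub_le x p.2)

theorem IsCompact.eventually_forall_lt_of_convexOn {K : Set ℝ} (hK : IsCompact K)
    (hfs : ∀ i, ConvexOn ℝ univ (fs i)) (hc : ∀ q, Tendsto (fun i => fs i q) l (𝓝 (f q)))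
    (ha : ∀ x ∈ K, a < f x) : ∀ᶠ i in l, ∀ q ∈ K, a < fs i q :=
  eventually_prod_principal_iff.1 <| prod_mono le_rfl principal_le_nhdsSet <|
    hK.mem_prod_nhdsSet_of_forall fun x hx => eventually_prod_nhds_lt_of_convexOn hfs hc (ha x hx)

theorem eventually_forall_lt_of_convexOn (hfs : ∀ i, ConvexOn ℝ univ (fs i))
    (hc : ∀ q, Tendsto (fun i => fs i q) l (𝓝 (f q))) (htop : Tendsto f atTop atTop)
    (hbot : Tendsto f atBot atTop) (ha : ∀ q, a < f q) : ∀ᶠ i in l, ∀ q, a < fs i q := by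
  obtain ⟨R, hR, hR0⟩ := ((htop.eventually_gt_atTop (f 0)).and (eventually_gt_atTop 0)).exists
  obtain ⟨L, hL, hL0⟩ := ((hbot.eventually_gt_atTop (f 0)).and (eventually_lt_atBot 0)).exists
  filter_upwards [isCompact_Icc.eventually_forall_lt_of_convexOn hfs hc fun x _ => ha x,
    (hc 0).eventually_lt (hc L) hL, (hc 0).eventually_lt (hc R) hR] with i hK hiL hiR q
  rcases lt_or_ge q L with hqL | hLq
  · refine (hK L ⟨le_rfl, (hL0.trans hR0).le⟩).trans_le ?_
    exact (hfs i).le_left_of_right_le (mem_univ q) (mem_univ 0)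
      (by rw [openSegment_eq_Ioo (hqL.trans hL0)]; exact ⟨hqL, hL0⟩) hiL.le
  rcases le_or_gt q R with hqR | hRq
  · exact hK q ⟨hLq, hqR⟩
  · refine (hK R ⟨(hL0.trans hR0).le, le_rfl⟩).trans_le ?_
    exact (hfs i).le_right_of_left_le (mem_univ 0) (mem_univ q)
      (by rw [openSegment_eq_Ioo (hR0.trans hRq)]; exact ⟨hR0, hRq⟩) hiR.le

end

theorem tendsto_ciInf_of_forall_tendsto {ι κ : Type*} [Nonempty ι] {l : Filter κ} {f : ι → ℝ}
    {fs : κ → ι → ℝ} (hc : ∀ q, Tendsto (fun i => fs i q) l (𝓝 (f q)))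
    (hlow : ∀ a < ⨅ q, f q, ∀ᶠ i in l, ∀ q, a < fs i q) :
    Tendsto (fun i => ⨅ q, fs i q) l (𝓝 (⨅ q, f q)) := by
  refine tendsto_order.2 ⟨fun a ha => ?_, fun a ha => ?_⟩
  · obtain ⟨b, hab, hb⟩ := exists_between ha
    filter_upwards [hlow b hb] with i hi using hab.trans_le (le_ciInf fun q => (hi q).le)
  · obtain ⟨q, hq⟩ := exists_lt_of_ciInf_lt ha
    filter_upwards [(hc q).eventually_lt_const hq, hlow _ (sub_one_lt _)] with i hi hlow
    exact (ciInf_le ⟨_, forall_mem_range.2 fun q => (hlow q).le⟩ q).trans_lt hi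

theorem tendsto_atTop_of_bddBelow_sub_mul {β : ℝ → ℝ} {a b : ℝ} (hab : a < b)
    (hb : BddBelow (range fun q => β q - q * b)) : Tendsto (fun q => β q - q * a) atTop atTop := by
  obtain ⟨c, hc⟩ := hb
  refine tendsto_atTop_mono (fun q => ?_)
    (tendsto_atTop_add_const_left _ c (tendsto_id.atTop_mul_const (sub_pos.2 hab)))
  have := hc ⟨q, rfl⟩
  simp only [id]
  linarith

theorem tendsto_atBot_of_bddBelow_sub_mul {β : ℝ → ℝ} {a b : ℝ} (hba : b < a)
    (hb : BddBelow (range fun q => β q - q * b)) : Tendsto (fun q => β q - q * a) atBot atTop := by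
  obtain ⟨c, hc⟩ := hb
  refine tendsto_atTop_mono (fun q => ?_)
    (tendsto_atTop_add_const_left _ c (tendsto_id.atBot_mul_const_of_neg (sub_neg.2 hba)))
  have := hc ⟨q, rfl⟩
  simp only [id]
  linarith

theorem conjugate_tendsto_of_convex_tendsto_general (β : ℝ → ℝ) (βi : ℕ → ℝ → ℝ)
    (hβi : ∀ i, ConvexOn ℝ Set.univ (βi i))
    (hconv : ∀ q : ℝ, Filter.Tendsto (fun i => βi i q) Filter.atTop (nhds (β q)))
    (α : ℝ)
    (hα : α ∈ interior {a : ℝ | BddBelow (Set.range fun q : ℝ => β q - q * a)}) :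
    Filter.Tendsto (fun i => ⨅ q : ℝ, (βi i q - q * α)) Filter.atTop
      (nhds (⨅ q : ℝ, (β q - q * α))) := by
  obtain ⟨lo, hi, ⟨hlo, hhi⟩, hsub⟩ :=
    mem_nhds_iff_exists_Ioo_subset.1 (mem_interior_iff_mem_nhds.1 hα)
  obtain ⟨b, hαb, hbhi⟩ := exists_between hhi
  obtain ⟨b', hlob', hb'α⟩ := exists_between hlo
  have hconvex : ∀ i, ConvexOn ℝ univ fun q => βi i q - q * α := fun i =>
    (hβi i).sub ((LinearMap.mulRight ℝ α).concaveOn convex_univ)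
  have hc : ∀ q, Tendsto (fun i => βi i q - q * α) atTop (𝓝 (β q - q * α)) := fun q =>
    (hconv q).sub_const _
  have hbdd : BddBelow (range fun q => β q - q * α) := hsub ⟨hlo, hhi⟩
  exact tendsto_ciInf_of_forall_tendsto hc fun a ha => eventually_forall_lt_of_convexOn hconvex hc
    (tendsto_atTop_of_bddBelow_sub_mul hαb (hsub ⟨hlo.trans hαb, hbhi⟩))
    (tendsto_atBot_of_bddBelow_sub_mul hb'α (hsub ⟨hlob', hb'α.trans hhi⟩))
    fun q => ha.trans_le (ciInf_le hbdd q)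

/-- Let `β : ℝ → ℝ` be a convex function and `β*(α) = inf_{q∈ℝ}(β(q) − qα)` its (concave)
conjugate, with domain `D = {α : β*(α) > −∞}` (i.e. the set of `α` for which the infimum is
finite). If `β_i` is a sequence of convex functions converging pointwise to `β`, then
`β_i*(α) → β*(α)` for every `α` in the interior of `D`. -/
theorem conjugate_tendsto_of_convex_tendsto (β : ℝ → ℝ) (βi : ℕ → ℝ → ℝ)
    (hβ : ConvexOn ℝ Set.univ β) (hβi : ∀ i, ConvexOn ℝ Set.univ (βi i))
    (hconv : ∀ q : ℝ, Filter.Tendsto (fun i => βi i q) Filter.atTop (nhds (β q)))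
    (α : ℝ)
    (hα : α ∈ interior {a : ℝ | BddBelow (Set.range fun q : ℝ => β q - q * a)}) :
    Filter.Tendsto (fun i => ⨅ q : ℝ, (βi i q - q * α)) Filter.atTop
      (nhds (⨅ q : ℝ, (β q - q * α))) :=
  conjugate_tendsto_of_convex_tendsto_general β βi hβi hconv α hα
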